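/- For |q|<1, $\sum_{i,j\geq 0} \frac{q^{2i^2+2ij+j^2+j}}{(q^2;q^2)_i (q^2;q^2)_j} = \frac{(q^4;q^4)_\infty^3}{(q^2;q^2)_\infty^2 (q^8;q^8)_\infty}$ (Example 2 with $B=(0,1/2)^T$, after replacing $q$ by $q^2$). -/

import Mathlib

/-!
Summing over `j` first, Euler's identity `∑ₘ Q^(m choose 2) wᵐ / (Q; Q)ₘ = (-w; Q)_∞` with
`Q = q²`, `w = q^(2i+2)` turns the inner sum into `(-q²; q²)_∞ / (-q²; q²)ᵢ`. As
`(q²; q²)ᵢ (-q²; q²)ᵢ = (q⁴; q⁴)ᵢ`, Euler's identity again (`Q = q⁴`, `w = q²`) sums the outer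
series to `(-q²; q⁴)_∞`. Finally `(a; y)_∞ (-a; y)_∞ = (a²; y²)_∞` and
`(a; y)_∞ = (a; y²)_∞ (ay; y²)_∞` express `(-q²; q²)_∞ (-q²; q⁴)_∞` through `(q²; q²)_∞`,
`(q⁴; q⁴)_∞` and `(q⁸; q⁸)_∞`.

Euler's identity itself comes from the functional equation `S(w) = (1 + w) S(Qw)` of its left side,
iterated `N` times; as `N → ∞`, `S(Qᴺ w) → S(0) = 1` by dominated convergence.
-/

open Finset Filter Topology

namespace QSeries

lemma two_mul_choose_two_add_self (n : ℕ) : 2 * n.choose 2 + n = n ^ 2 := by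
  induction n with
  | zero => simp
  | succ n ih => rw [Nat.choose_succ_succ, Nat.choose_one_right]; ring_nf; ring_nf at ih; omega

lemma norm_pow_lt_one {x : ℂ} (hx : ‖x‖ < 1) {n : ℕ} (hn : n ≠ 0) : ‖x ^ n‖ < 1 := by
  rw [norm_pow]
  exact pow_lt_one₀ (norm_nonneg x) hx hn

/-- `(a; y)_n` -/
def qPochhammer (a y : ℂ) (n : ℕ) : ℂ := ∏ k ∈ range n, (1 - a * y ^ k)

/-- `(a; y)_∞` -/
noncomputable def qPochhammerInf (a y : ℂ) : ℂ := ∏' k : ℕ, (1 - a * y ^ k)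

section Pochhammer

variable {a y : ℂ}

lemma qPochhammer_zero : qPochhammer a y 0 = 1 := prod_range_zero _

lemma qPochhammer_succ (n : ℕ) :
    qPochhammer a y (n + 1) = qPochhammer a y n * (1 - a * y ^ n) := prod_range_succ _ _

lemma qPochhammer_sq (n : ℕ) :
    qPochhammer (a ^ 2) (y ^ 2) n = qPochhammer a y n * qPochhammer (-a) y n := by
  simp only [qPochhammer, ← prod_mul_distrib]
  exact prod_congr rfl fun k _ => by ring

lemma one_sub_mul_pow_ne_zero (ha : ‖a‖ < 1) (hy : ‖y‖ ≤ 1) (k : ℕ) : 1 - a * y ^ k ≠ 0 := by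
  intro h
  have h1 : a * y ^ k = 1 := by linear_combination -h
  have : ‖a * y ^ k‖ < 1 := by
    rw [norm_mul, norm_pow]
    exact (mul_le_of_le_one_right (norm_nonneg a) (pow_le_one₀ (norm_nonneg y) hy)).trans_lt ha
  simp [h1] at this

lemma qPochhammer_ne_zero (ha : ‖a‖ < 1) (hy : ‖y‖ ≤ 1) (n : ℕ) : qPochhammer a y n ≠ 0 :=
  prod_ne_zero_iff.mpr fun k _ => one_sub_mul_pow_ne_zero ha hy k

lemma norm_qPochhammer_le_two_pow (ha : ‖a‖ ≤ 1) (hy : ‖y‖ ≤ 1) (n : ℕ) :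
    ‖qPochhammer a y n‖ ≤ 2 ^ n := by
  refine (Finset.norm_prod_le _ _).trans ?_
  calc ∏ k ∈ range n, ‖1 - a * y ^ k‖ ≤ ∏ _k ∈ range n, (2 : ℝ) := by
        refine prod_le_prod (fun k _ => norm_nonneg _) fun k _ => ?_
        calc ‖1 - a * y ^ k‖ ≤ ‖(1 : ℂ)‖ + ‖a * y ^ k‖ := norm_sub_le _ _
          _ ≤ 1 + 1 := by
            rw [norm_one, norm_mul, norm_pow]
            gcongr
            exact mul_le_one₀ ha (by positivity) (pow_le_one₀ (norm_nonneg y) hy)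
          _ = 2 := by norm_num
    _ = 2 ^ n := by rw [prod_const, card_range]

lemma summable_norm_mul_pow (a : ℂ) (hy : ‖y‖ < 1) : Summable fun k : ℕ => ‖a * y ^ k‖ := by
  simpa [norm_mul, norm_pow] using
    (summable_geometric_of_lt_one (norm_nonneg y) hy).mul_left ‖a‖

lemma multipliable_one_sub_mul_pow (a : ℂ) (hy : ‖y‖ < 1) :
    Multipliable fun k : ℕ => 1 - a * y ^ k := by
  simpa [sub_eq_add_neg] using multipliable_one_add_of_summable (f := fun k => -(a * y ^ k))
    (by simpa using summable_norm_mul_pow a hy)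

lemma qPochhammerInf_ne_zero (ha : ‖a‖ < 1) (hy : ‖y‖ < 1) : qPochhammerInf a y ≠ 0 := by
  simpa [qPochhammerInf, sub_eq_add_neg] using tprod_one_add_ne_zero_of_summable
    (f := fun k => -(a * y ^ k))
    (by simpa [← sub_eq_add_neg] using one_sub_mul_pow_ne_zero ha hy.le)
    (by simpa using summable_norm_mul_pow a hy)

lemma qPochhammerInf_mul_neg (a : ℂ) (hy : ‖y‖ < 1) :
    qPochhammerInf a y * qPochhammerInf (-a) y = qPochhammerInf (a ^ 2) (y ^ 2) := by
  rw [qPochhammerInf, qPochhammerInf, ← (multipliable_one_sub_mul_pow a hy).tprod_mul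
    (multipliable_one_sub_mul_pow (-a) hy)]
  exact tprod_congr fun k => by ring

lemma qPochhammerInf_eq_mul (a : ℂ) (hy : ‖y‖ < 1) :
    qPochhammerInf a y = qPochhammerInf a (y ^ 2) * qPochhammerInf (a * y) (y ^ 2) := by
  have hy2 := norm_pow_lt_one hy two_ne_zero
  rw [qPochhammerInf, ← tprod_even_mul_odd (f := fun k => 1 - a * y ^ k)]
  · congr 1 <;> exact tprod_congr fun k => by ring
  · exact (multipliable_one_sub_mul_pow a hy2).congr fun k => by ring
  · exact (multipliable_one_sub_mul_pow (a * y) hy2).congr fun k => by ring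

theorem qPochhammerInf_neg_mul_neg {x : ℂ} (hx : ‖x‖ < 1) :
    qPochhammerInf (-x) x * qPochhammerInf (-x) (x ^ 2) =
      qPochhammerInf (x ^ 2) (x ^ 2) ^ 3 /
        (qPochhammerInf x x ^ 2 * qPochhammerInf (x ^ 4) (x ^ 4)) := by
  have hx2 := norm_pow_lt_one hx two_ne_zero
  have hx4 := norm_pow_lt_one hx four_ne_zero
  have hGA := qPochhammerInf_mul_neg x hx
  have hEH : qPochhammerInf x (x ^ 2) * qPochhammerInf (-x) (x ^ 2) =
      qPochhammerInf (x ^ 2) (x ^ 4) := by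
    rw [qPochhammerInf_mul_neg x hx2]; ring_nf
  have hA : qPochhammerInf x x = qPochhammerInf x (x ^ 2) * qPochhammerInf (x ^ 2) (x ^ 2) := by
    rw [qPochhammerInf_eq_mul x hx]; ring_nf
  have hB : qPochhammerInf (x ^ 2) (x ^ 2) =
      qPochhammerInf (x ^ 2) (x ^ 4) * qPochhammerInf (x ^ 4) (x ^ 4) := by
    rw [qPochhammerInf_eq_mul (x ^ 2) hx2]; ring_nf
  set A := qPochhammerInf x x
  set B := qPochhammerInf (x ^ 2) (x ^ 2)
  set C := qPochhammerInf (x ^ 4) (x ^ 4)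
  set H := qPochhammerInf (-x) (x ^ 2)
  rw [eq_div_iff (mul_ne_zero (pow_ne_zero 2 (qPochhammerInf_ne_zero hx hx))
    (qPochhammerInf_ne_zero hx4 hx4))]
  linear_combination (H * A * C) * hGA + (B * H * C) * hA + (B ^ 2 * C) * hEH - B ^ 2 * hB

end Pochhammer

noncomputable def eulerTerm (Q w : ℂ) (m : ℕ) : ℂ := Q ^ m.choose 2 * w ^ m / qPochhammer Q Q m

section Euler

variable {Q : ℂ}

@[simp]
lemma eulerTerm_zero (w : ℂ) : eulerTerm Q w 0 = 1 := by simp [eulerTerm, qPochhammer_zero]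

lemma eulerTerm_succ (hQ : ‖Q‖ < 1) (w : ℂ) (m : ℕ) :
    eulerTerm Q w (m + 1) = eulerTerm Q w m * (Q ^ m * w / (1 - Q * Q ^ m)) := by
  have h1 := qPochhammer_ne_zero hQ hQ.le m
  have h2 := one_sub_mul_pow_ne_zero hQ hQ.le m
  have hc : (m + 1).choose 2 = m + m.choose 2 := by rw [Nat.choose_succ_succ, Nat.choose_one_right]
  rw [eulerTerm, eulerTerm, qPochhammer_succ, hc]
  field_simp
  ring

lemma eulerTerm_mul (c w : ℂ) (m : ℕ) : eulerTerm Q (c * w) m = c ^ m * eulerTerm Q w m := by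
  simp only [eulerTerm, mul_pow]
  ring

lemma summable_norm_eulerTerm (hQ : ‖Q‖ < 1) (w : ℂ) : Summable fun m => ‖eulerTerm Q w m‖ := by
  refine summable_of_ratio_norm_eventually_le (r := 1 / 2) (by norm_num) ?_
  have hgap : 0 < 1 - ‖Q‖ := by linarith
  have hlim : Tendsto (fun m : ℕ => ‖Q‖ ^ m * ‖w‖) atTop (𝓝 0) := by
    simpa using (tendsto_pow_atTop_nhds_zero_of_lt_one (norm_nonneg Q) hQ).mul_const ‖w‖
  filter_upwards [hlim.eventually (eventually_le_nhds (half_pos hgap))] with m hm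
  have hden : 1 - ‖Q‖ ≤ ‖1 - Q * Q ^ m‖ := by
    calc 1 - ‖Q‖ ≤ 1 - ‖Q‖ ^ (m + 1) := by
          gcongr; exact pow_le_of_le_one (norm_nonneg Q) hQ.le (Nat.succ_ne_zero m)
      _ = ‖(1 : ℂ)‖ - ‖Q * Q ^ m‖ := by rw [norm_one, ← pow_succ', norm_pow]
      _ ≤ ‖1 - Q * Q ^ m‖ := norm_sub_norm_le _ _
  have hratio : ‖Q ^ m * w / (1 - Q * Q ^ m)‖ ≤ 1 / 2 := by
    rw [norm_div, norm_mul, norm_pow, div_le_iff₀ (hgap.trans_le hden)]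
    linarith
  rw [norm_norm, norm_norm, eulerTerm_succ hQ, norm_mul, mul_comm]
  exact mul_le_mul_of_nonneg_right hratio (norm_nonneg _)

lemma summable_eulerTerm (hQ : ‖Q‖ < 1) (w : ℂ) : Summable (eulerTerm Q w) :=
  (summable_norm_eulerTerm hQ w).of_norm

lemma eulerTerm_succ_sub_eulerTerm_mul (hQ : ‖Q‖ < 1) (w : ℂ) (m : ℕ) :
    eulerTerm Q w (m + 1) - eulerTerm Q (Q * w) (m + 1) = w * eulerTerm Q (Q * w) m := by
  have h := one_sub_mul_pow_ne_zero hQ hQ.le m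
  rw [eulerTerm_mul, eulerTerm_mul, eulerTerm_succ hQ, div_eq_mul_inv]
  linear_combination (eulerTerm Q w m * Q ^ m * w) * mul_inv_cancel₀ h

lemma tsum_eulerTerm_eq_mul (hQ : ‖Q‖ < 1) (w : ℂ) :
    ∑' m, eulerTerm Q w m = (1 + w) * ∑' m, eulerTerm Q (Q * w) m := by
  have hdiff := (summable_eulerTerm hQ w).sub (summable_eulerTerm hQ (Q * w))
  have h := hdiff.tsum_eq_zero_add
  simp only [eulerTerm_zero, sub_self, zero_add, eulerTerm_succ_sub_eulerTerm_mul hQ,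
    tsum_mul_left] at h
  rw [(summable_eulerTerm hQ w).tsum_sub (summable_eulerTerm hQ (Q * w))] at h
  linear_combination h

lemma tsum_eulerTerm_eq_qPochhammer_mul (hQ : ‖Q‖ < 1) (w : ℂ) (N : ℕ) :
    ∑' m, eulerTerm Q w m = qPochhammer (-w) Q N * ∑' m, eulerTerm Q (Q ^ N * w) m := by
  induction N with
  | zero => simp [qPochhammer_zero]
  | succ N ih =>
    rw [ih, tsum_eulerTerm_eq_mul hQ, qPochhammer_succ, pow_succ', mul_assoc Q]
    ring

lemma tendsto_tsum_eulerTerm_pow_mul (hQ : ‖Q‖ < 1) (w : ℂ) :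
    Tendsto (fun N : ℕ => ∑' m, eulerTerm Q (Q ^ N * w) m) atTop (𝓝 1) := by
  have hlim : ∑' m, eulerTerm Q 0 m = 1 := by
    rw [tsum_eq_single 0 fun m hm => by simp [eulerTerm, hm]]
    exact eulerTerm_zero 0
  rw [← hlim]
  refine tendsto_tsum_of_dominated_convergence (summable_norm_eulerTerm hQ w) (fun m => ?_)
    (Eventually.of_forall fun N m => ?_)
  · have hcont : Continuous fun z : ℂ => eulerTerm Q z m := by unfold eulerTerm; fun_prop
    have hpow : Tendsto (fun N : ℕ => Q ^ N * w) atTop (𝓝 0) := by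
      simpa using (tendsto_pow_atTop_nhds_zero_of_norm_lt_one hQ).mul_const w
    exact hcont.continuousAt.tendsto.comp hpow
  · rw [eulerTerm_mul, norm_mul, norm_pow, norm_pow]
    exact mul_le_of_le_one_left (norm_nonneg _)
      (pow_le_one₀ (pow_nonneg (norm_nonneg Q) N) (pow_le_one₀ (norm_nonneg Q) hQ.le))

lemma eulerTerm_sq_mul_qPochhammer_neg (hQ : ‖Q‖ < 1) (w : ℂ) (m : ℕ) :
    eulerTerm (Q ^ 2) w m * qPochhammer (-Q) Q m =
      (Q ^ 2) ^ m.choose 2 * w ^ m / qPochhammer Q Q m := by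
  have h := qPochhammer_ne_zero (a := -Q) (by rwa [norm_neg]) hQ.le m
  rw [eulerTerm, qPochhammer_sq]
  field_simp

theorem tsum_eulerTerm (hQ : ‖Q‖ < 1) (w : ℂ) : ∑' m, eulerTerm Q w m = qPochhammerInf (-w) Q := by
  have hprod : Tendsto (qPochhammer (-w) Q) atTop (𝓝 (qPochhammerInf (-w) Q)) :=
    (multipliable_one_sub_mul_pow (-w) hQ).tendsto_prod_tprod_nat
  have h := hprod.mul (tendsto_tsum_eulerTerm_pow_mul hQ w)
  rw [mul_one] at h
  refine tendsto_nhds_unique ?_ h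
  simpa only [← tsum_eulerTerm_eq_qPochhammer_mul hQ] using tendsto_const_nhds

end Euler

theorem tsum_prod_eulerTerm {x : ℂ} (hx : ‖x‖ < 1) :
    ∑' p : ℕ × ℕ, eulerTerm (x ^ 2) x p.1 * qPochhammer (-x) x p.1 * eulerTerm x (x ^ p.1 * x) p.2 =
      qPochhammerInf (-x) x * qPochhammerInf (-x) (x ^ 2) := by
  have hx2 := norm_pow_lt_one hx two_ne_zero
  -- `‖(-x; x)ᵢ‖ ≤ 2ⁱ` is absorbed by Euler's series at `2x`, which converges for every argument.
  have hbound (i j : ℕ) :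
      ‖eulerTerm (x ^ 2) x i * qPochhammer (-x) x i * eulerTerm x (x ^ i * x) j‖ ≤
        ‖eulerTerm (x ^ 2) (2 * x) i‖ * ‖eulerTerm x x j‖ := by
    rw [eulerTerm_mul, eulerTerm_mul, norm_mul, norm_mul, norm_mul, norm_mul, norm_pow, norm_pow,
      norm_pow, Complex.norm_two]
    have h1 := norm_qPochhammer_le_two_pow (a := -x) (by rw [norm_neg]; exact hx.le) hx.le i
    have h2 : (‖x‖ ^ i) ^ j ≤ 1 := pow_le_one₀ (by positivity) (pow_le_one₀ (norm_nonneg x) hx.le)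
    calc ‖eulerTerm (x ^ 2) x i‖ * ‖qPochhammer (-x) x i‖ * ((‖x‖ ^ i) ^ j * ‖eulerTerm x x j‖)
        ≤ ‖eulerTerm (x ^ 2) x i‖ * 2 ^ i * (1 * ‖eulerTerm x x j‖) := by gcongr
      _ = 2 ^ i * ‖eulerTerm (x ^ 2) x i‖ * ‖eulerTerm x x j‖ := by ring
  have hsum : Summable fun p : ℕ × ℕ =>
      eulerTerm (x ^ 2) x p.1 * qPochhammer (-x) x p.1 * eulerTerm x (x ^ p.1 * x) p.2 :=
    .of_norm_bounded ((summable_norm_eulerTerm hx2 (2 * x)).mul_of_nonneg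
      (summable_norm_eulerTerm hx x) (fun _ => norm_nonneg _) fun _ => norm_nonneg _)
      fun p => hbound p.1 p.2
  have hinner (i : ℕ) :
      ∑' j, eulerTerm (x ^ 2) x i * qPochhammer (-x) x i * eulerTerm x (x ^ i * x) j =
        eulerTerm (x ^ 2) x i * ∑' j, eulerTerm x x j := by
    rw [tsum_mul_left, mul_assoc, tsum_eulerTerm_eq_qPochhammer_mul hx x i]
  rw [hsum.tsum_prod, tsum_congr hinner, tsum_mul_right, tsum_eulerTerm hx, tsum_eulerTerm hx2,
    mul_comm]

end QSeries

open QSeries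

/-- Example 2 with B = (0, 1/2)ᵀ (after replacing q by q²). -/
theorem example2_case3 (q : ℂ) (hq : ‖q‖ < 1) :
    ∑' p : ℕ × ℕ,
      q ^ (2 * p.1 ^ 2 + 2 * p.1 * p.2 + p.2 ^ 2 + p.2) /
        ((∏ k ∈ Finset.range p.1, (1 - q ^ (2 * (k + 1)))) *
          ∏ k ∈ Finset.range p.2, (1 - q ^ (2 * (k + 1)))) =
    (∏' k : ℕ, (1 - q ^ (4 * (k + 1)))) ^ 3 /
      ((∏' k : ℕ, (1 - q ^ (2 * (k + 1)))) ^ 2 * ∏' k : ℕ, (1 - q ^ (8 * (k + 1)))) := by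
  have hq2 := norm_pow_lt_one hq two_ne_zero
  have hpoch (n : ℕ) : ∏ k ∈ range n, (1 - q ^ (2 * (k + 1))) = qPochhammer (q ^ 2) (q ^ 2) n :=
    prod_congr rfl fun k _ => by ring
  have hsummand (i j : ℕ) :
      q ^ (2 * i ^ 2 + 2 * i * j + j ^ 2 + j) /
          (qPochhammer (q ^ 2) (q ^ 2) i * qPochhammer (q ^ 2) (q ^ 2) j) =
        eulerTerm ((q ^ 2) ^ 2) (q ^ 2) i * qPochhammer (-q ^ 2) (q ^ 2) i *
          eulerTerm (q ^ 2) ((q ^ 2) ^ i * q ^ 2) j := by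
    have hexp : 2 * i ^ 2 + 2 * i * j + j ^ 2 + j =
        4 * i.choose 2 + 2 * i + (2 * j.choose 2 + 2 * i * j + 2 * j) := by
      linarith [two_mul_choose_two_add_self i, two_mul_choose_two_add_self j]
    rw [eulerTerm_sq_mul_qPochhammer_neg hq2, eulerTerm, hexp, div_mul_div_comm]
    ring
  have hinf (c : ℕ) : ∏' k : ℕ, (1 - q ^ (c * (k + 1))) = qPochhammerInf (q ^ c) (q ^ c) :=
    tprod_congr fun k => by ring
  simp only [hpoch, hsummand, hinf]
  rw [tsum_prod_eulerTerm hq2, qPochhammerInf_neg_mul_neg hq2]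
  norm_num [← pow_mul]
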